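/- arXiv:2005.02254 — 2 statements merged into one kernel-verified Lean document; each statement's English description precedes it below -/
import Mathlib

section
/- Stability of the imaginary part of the self-consistent equation: Let z = L₀ + 𝒵 + κ + iη where w = κ + iη ∈ 𝔜_* (so κ ≥ N^{−δ}/(√N q) and η = N^{−δ}N^{−5/8}q^{−1/4}). Assume |Ḡ − m| ≺ √κ N^{−δ}, |∂₂P(z,m)| ≍ √κ, |Im ∂₂^k P(z,m)| ≺ 1/(N^{1+δ}η) for all k ≥ 1, and |∂₂^k P(z,m)| ≺ 1. If Im P(z, Ḡ) ≺ ε for a deterministic ε ∈ [N^{−1}, N^{−δ}], then |Im Ḡ − Im m| ≺ ε/√κ + 1/(N^{1+δ}η). -/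
open MeasureTheory

/-- Stochastic domination for `N`-indexed families of random variables against deterministic
control parameters. -/
def SDom {Ω : ℕ → Type*} [∀ n, MeasurableSpace (Ω n)]
    (P : ∀ n, Measure (Ω n)) (X : ∀ n, Ω n → ℝ) (Y : ℕ → ℝ) : Prop :=
  ∀ ε : ℝ, 0 < ε → ∀ D : ℝ, 0 < D → ∃ N₀ : ℕ, ∀ n, N₀ ≤ n →
    P n {ω | (n : ℝ) ^ ε * Y n < |X n ω|} ≤ ENNReal.ofReal ((n : ℝ) ^ (-D))

/-!
Write `u = Ḡ - m` and `a_k = ∂₂^k P(z, m) / k!`, so that `P(z, Ḡ) = Σ_{k ≥ 1} a_k u^k`.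
The imaginary part of the linear term is `Re a₁ · Im u + Im a₁ · Re u`, and
`|Re a₁| ≳ √κ` because `|a₁| ≍ √κ` while `|Im a₁| ≺ 1/(N^{1+δ}η) ≪ √κ`.
For `k ≥ 2`, `|Im (a_k u^k)| ≤ k |a_k| |u|^{k-1} |Im u| + |Im a_k| |u|^k`, and `|u| ≺ √κ N^{-δ}`
makes the first part a small multiple of `√κ |Im u|`, which is absorbed.  Solving for `|Im u|`
gives `|Im u| ≲ |Im P(z, Ḡ)| / √κ + 1/(N^{1+δ}η)`.  All the inputs hold, up to a factor `N^{ξ'}`,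
outside finitely many events of probability `O(N^{-D})`, whose union is again negligible.
-/

open Filter Finset Polynomial

namespace Polynomial

variable {𝕜 : Type*} [NontriviallyNormedField 𝕜]

theorem iteratedDeriv_eval_eq_factorial_mul_hasseDeriv (p : 𝕜[X]) (k : ℕ) (x : 𝕜) :
    iteratedDeriv k (fun y => p.eval y) x = (k.factorial : 𝕜) * (hasseDeriv k p).eval x := by
  have h : iteratedDeriv k (fun y => p.eval y) = fun y => (derivative^[k] p).eval y := by
    induction k with
    | zero => simp
    | succ k ih =>
      rw [iteratedDeriv_succ, ih, Function.iterate_succ_apply']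
      ext y
      exact Polynomial.deriv _
  rw [h, ← factorial_smul_hasseDeriv]
  simp [nsmul_eq_mul]

theorem eval_eq_sum_range_hasseDeriv {R : Type*} [CommRing R] (p : R[X]) {K : ℕ}
    (hp : p.natDegree ≤ K) (m x : R) :
    p.eval x = ∑ k ∈ range (K + 1), (hasseDeriv k p).eval m * (x - m) ^ k := by
  rw [← taylor_eval_sub m p x, eval_eq_sum_range' (n := K + 1) (by rw [natDegree_taylor]; omega)]
  simp [taylor_coeff]

end Polynomial

namespace Complex

theorem abs_im_pow_succ_le (w : ℂ) (k : ℕ) :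
    |(w ^ (k + 1)).im| ≤ (k + 1) * ‖w‖ ^ k * |w.im| := by
  induction k with
  | zero => simp
  | succ k ih =>
    rw [pow_succ, mul_im]
    calc |(w ^ (k + 1)).re * w.im + (w ^ (k + 1)).im * w.re|
        ≤ ‖w‖ ^ (k + 1) * |w.im| + ((k + 1) * ‖w‖ ^ k * |w.im|) * ‖w‖ := by
          refine (abs_add_le _ _).trans (add_le_add ?_ ?_) <;> rw [abs_mul]
          · gcongr
            exact (abs_re_le_norm _).trans (norm_pow w _).le
          · gcongr
            exact abs_re_le_norm w
      _ = (↑(k + 1) + 1) * ‖w‖ ^ (k + 1) * |w.im| := by push_cast; ring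

theorem abs_im_mul_pow_succ_le (a u : ℂ) (k : ℕ) :
    |(a * u ^ (k + 1)).im| ≤ (k + 1) * ‖a‖ * ‖u‖ ^ k * |u.im| + |a.im| * ‖u‖ ^ (k + 1) := by
  rw [mul_im]
  calc |a.re * (u ^ (k + 1)).im + a.im * (u ^ (k + 1)).re|
      ≤ ‖a‖ * ((k + 1) * ‖u‖ ^ k * |u.im|) + |a.im| * ‖u‖ ^ (k + 1) := by
        refine (abs_add_le _ _).trans (add_le_add ?_ ?_) <;> rw [abs_mul]
        · exact mul_le_mul (abs_re_le_norm a) (abs_im_pow_succ_le u k) (abs_nonneg _)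
            (norm_nonneg a)
        · gcongr
          exact (abs_re_le_norm _).trans (norm_pow u _).le
    _ = _ := by ring

theorem abs_re_mul_abs_im_le (a u : ℂ) : |a.re| * |u.im| ≤ |(a * u).im| + |a.im| * ‖u‖ := by
  have h : a.re * u.im = (a * u).im - a.im * u.re := by rw [mul_im]; ring
  rw [← abs_mul, h]
  refine (abs_sub _ _).trans (add_le_add le_rfl ?_)
  rw [abs_mul]
  gcongr
  exact abs_re_le_norm u

theorem mul_abs_im_le_of_linear_term_dominant (a : ℕ → ℂ) (K : ℕ) (u : ℂ) {c s A B M : ℝ}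
    (hu : ‖u‖ ≤ A) (hA : A ≤ 1) (ha₁ : c * s ≤ ‖a 1‖) (him₁ : |(a 1).im| ≤ B)
    (him : ∀ k < K, |(a (k + 2)).im| ≤ B) (hnorm : ∀ k < K, ‖a (k + 2)‖ ≤ M)
    (hB : 2 * B ≤ c * s) (hsmall : K * (K + 1) * M * A ≤ c * s / 4) :
    c * s / 4 * |u.im| ≤
      |(a 1 * u + ∑ k ∈ range K, a (k + 2) * u ^ (k + 2)).im| + (K + 1) * B * A := by
  set H := ∑ k ∈ range K, a (k + 2) * u ^ (k + 2)
  have hB0 : 0 ≤ B := (abs_nonneg _).trans him₁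
  have hre : c * s / 2 ≤ |(a 1).re| := by
    linarith [norm_le_abs_re_add_abs_im (a 1)]
  have hpow : ∀ j, ‖u‖ ^ (j + 1) ≤ A := fun j =>
    (pow_le_of_le_one (norm_nonneg u) ((hu.trans hA)) j.succ_ne_zero).trans hu
  have hterm : ∀ k ∈ range K,
      |(a (k + 2) * u ^ (k + 2)).im| ≤ (K + 1) * M * A * |u.im| + B * A := by
    intro k hk
    have hkK : k < K := mem_range.1 hk
    have hk : (k : ℝ) + 1 ≤ K := by exact_mod_cast hkK
    have ha := hnorm k hkK
    have hM : 0 ≤ M := (norm_nonneg _).trans ha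
    have ha' := him k hkK
    have hu₁ := hpow k
    have hu₂ := hpow (k + 1)
    calc |(a (k + 2) * u ^ (k + 2)).im|
        ≤ (↑(k + 1) + 1) * ‖a (k + 2)‖ * ‖u‖ ^ (k + 1) * |u.im|
          + |(a (k + 2)).im| * ‖u‖ ^ (k + 1 + 1) := abs_im_mul_pow_succ_le _ _ _
      _ ≤ (K + 1) * M * A * |u.im| + B * A := by push_cast; gcongr
  have hhigh : |H.im| ≤ K * ((K + 1) * M * A * |u.im| + B * A) := by
    calc |H.im| ≤ ∑ k ∈ range K, |(a (k + 2) * u ^ (k + 2)).im| := by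
          rw [im_sum]; exact abs_sum_le_sum_abs _ _
      _ ≤ _ := by simpa only [sum_const, card_range, nsmul_eq_mul] using sum_le_sum hterm
  have hlin : |(a 1).re| * |u.im| ≤ |(a 1 * u + H).im| + |H.im| + B * A := by
    have h := abs_re_mul_abs_im_le (a 1) u
    have hsub : (a 1 * u).im = (a 1 * u + H).im - H.im := by simp
    have : |(a 1).im| * ‖u‖ ≤ B * A := mul_le_mul him₁ hu (norm_nonneg u) hB0
    linarith [abs_sub ((a 1 * u + H).im) H.im, hsub ▸ h]
  have h1 := mul_le_mul_of_nonneg_right hre (abs_nonneg u.im)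
  have h2 := mul_le_mul_of_nonneg_right hsmall (abs_nonneg u.im)
  nlinarith

end Complex

namespace Polynomial

theorem abs_im_eval_hasseDeriv_le_and_norm_le (p : ℂ[X]) (k : ℕ) (m : ℂ) :
    |((hasseDeriv k p).eval m).im| ≤ |(iteratedDeriv k (fun y => p.eval y) m).im| ∧
      ‖(hasseDeriv k p).eval m‖ ≤ ‖iteratedDeriv k (fun y => p.eval y) m‖ := by
  have hk : (1 : ℝ) ≤ k.factorial := by exact_mod_cast k.factorial_pos
  rw [iteratedDeriv_eval_eq_factorial_mul_hasseDeriv, ← Complex.ofReal_natCast,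
    Complex.im_ofReal_mul, abs_mul, norm_mul, Complex.norm_real, Real.norm_eq_abs,
    Nat.abs_cast]
  exact ⟨le_mul_of_one_le_left (abs_nonneg _) hk, le_mul_of_one_le_left (norm_nonneg _) hk⟩

theorem mul_abs_im_sub_le (p : ℂ[X]) {K : ℕ} (hp : p.natDegree ≤ K + 1) {m x : ℂ}
    (hm : p.eval m = 0) {c s A B M : ℝ} (hu : ‖x - m‖ ≤ A) (hA : A ≤ 1)
    (hd : c * s ≤ ‖deriv (fun y => p.eval y) m‖)
    (him : ∀ k ∈ Icc 1 (K + 1), |(iteratedDeriv k (fun y => p.eval y) m).im| ≤ B)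
    (hnorm : ∀ k ∈ Icc 2 (K + 1), ‖iteratedDeriv k (fun y => p.eval y) m‖ ≤ M)
    (hB : 2 * B ≤ c * s) (hsmall : K * (K + 1) * M * A ≤ c * s / 4) :
    c * s / 4 * |(x - m).im| ≤ |(p.eval x).im| + (K + 1) * B * A := by
  set a : ℕ → ℂ := fun k => (hasseDeriv k p).eval m
  have hcoef := abs_im_eval_hasseDeriv_le_and_norm_le p
  have hexp : p.eval x = a 1 * (x - m) + ∑ k ∈ range K, a (k + 2) * (x - m) ^ (k + 2) := by
    rw [eval_eq_sum_range_hasseDeriv p hp m x, sum_range_succ', sum_range_succ']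
    simp [a, hm]
    ring
  have ha₁ : a 1 = deriv (fun y => p.eval y) m := by
    simp [a, Polynomial.deriv]
  rw [hexp]
  refine Complex.mul_abs_im_le_of_linear_term_dominant a K (x - m) hu hA (ha₁ ▸ hd)
    ((hcoef 1 m).1.trans (him 1 (by simp))) (fun k hk => (hcoef _ m).1.trans (him _ ?_))
    (fun k hk => (hcoef _ m).2.trans (hnorm _ ?_)) hB hsmall <;> simp <;> omega

theorem abs_im_sub_le_of_rpow_bounds (p : ℂ[X]) {K : ℕ} (hp : p.natDegree ≤ K + 1)
    {m x : ℂ} (hm : p.eval m = 0) {N ξ ξ' δ θ c s b ε : ℝ} (hN : 1 ≤ N) (hξ'δ : ξ' ≤ δ)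
    (hc : 0 < c) (hs : 0 < s) (hs1 : s ≤ 1) (hb : b ≤ N ^ (-θ) * s)
    (hθ : 2 * N ^ (ξ' - θ) ≤ c) (hδ : K * (K + 1) * N ^ (2 * ξ' - δ) ≤ c / 4)
    (hξ : 4 * (K + 1) / c ≤ N ^ (ξ - ξ'))
    (hu : ‖x - m‖ ≤ N ^ ξ' * (s * N ^ (-δ))) (hP : |(p.eval x).im| ≤ N ^ ξ' * ε)
    (hd : c * s ≤ ‖deriv (fun y => p.eval y) m‖)
    (him : ∀ k ∈ Icc 1 (K + 1), |(iteratedDeriv k (fun y => p.eval y) m).im| ≤ N ^ ξ' * b)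
    (hnorm : ∀ k ∈ Icc 2 (K + 1), ‖iteratedDeriv k (fun y => p.eval y) m‖ ≤ N ^ ξ') :
    |(x - m).im| ≤ N ^ ξ * (ε / s + b) := by
  have hN0 : 0 < N := by linarith
  set t := N ^ ξ' with ht_def
  have ht : 0 < t := Real.rpow_pos_of_pos hN0 ξ'
  have hb0 : 0 ≤ b := (mul_nonneg_iff_of_pos_left ht).1 ((abs_nonneg _).trans (him 1 (by simp)))
  have hε0 : 0 ≤ ε := (mul_nonneg_iff_of_pos_left ht).1 ((abs_nonneg _).trans hP)
  have hAs : t * (s * N ^ (-δ)) ≤ s := by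
    have : t * N ^ (-δ) ≤ 1 := by
      rw [← Real.rpow_add hN0]
      exact Real.rpow_le_one_of_one_le_of_nonpos hN (by linarith)
    nlinarith
  have hB : 2 * (t * b) ≤ c * s := by
    have : t * N ^ (-θ) = N ^ (ξ' - θ) := by rw [← Real.rpow_add hN0, sub_eq_add_neg]
    nlinarith [mul_le_mul_of_nonneg_left hb ht.le]
  have hsmall : K * (K + 1) * t * (t * (s * N ^ (-δ))) ≤ c * s / 4 := by
    have : t * t * N ^ (-δ) = N ^ (2 * ξ' - δ) := by
      rw [← Real.rpow_add hN0, ← Real.rpow_add hN0]; ring_nf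
    calc K * (K + 1) * t * (t * (s * N ^ (-δ))) = K * (K + 1) * N ^ (2 * ξ' - δ) * s := by
          rw [← this]; ring
      _ ≤ c / 4 * s := by gcongr
      _ = c * s / 4 := by ring
  have key := mul_abs_im_sub_le p hp hm hu (hAs.trans hs1) hd him hnorm hB hsmall
  have hA := mul_le_mul_of_nonneg_left hAs (by positivity : (0 : ℝ) ≤ (K + 1) * (t * b))
  have hbound : |(x - m).im| ≤ 4 * (K + 1) / c * t * (ε / s + b) := by
    rw [show 4 * (K + 1) / c * t * (ε / s + b)
        = ((K + 1) * (t * ε) + (K + 1) * (t * b) * s) / (c * s / 4) by field_simp,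
      le_div_iff₀ (by positivity)]
    nlinarith [mul_nonneg (Nat.cast_nonneg K : (0 : ℝ) ≤ K) (mul_nonneg ht.le hε0)]
  calc |(x - m).im| ≤ 4 * (K + 1) / c * t * (ε / s + b) := hbound
    _ ≤ N ^ (ξ - ξ') * t * (ε / s + b) := by gcongr
    _ = N ^ ξ * (ε / s + b) := by rw [ht_def, ← Real.rpow_add hN0, sub_add_cancel]

end Polynomial

theorem exponents_pos {β δ : ℝ} (hβ : 0 < β) (hβ' : β < 1 / 6)
    (hδ : δ = min β (1 / 6 - β) / 10) : 0 < δ ∧ 0 < 1 / 8 - 3 * β / 4 - δ / 2 := by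
  subst hδ
  exact ⟨div_pos (lt_min hβ (by linarith)) (by norm_num),
    by linarith [min_le_right β (1 / 6 - β)]⟩

open Real in
theorem sqrt_kappa_bounds {β δ κ η q N : ℝ} (hN : 1 ≤ N) (hq : q = N ^ β)
    (hκ : N ^ (-δ) / (√N * q) ≤ κ ∧ κ ≤ 1)
    (hη : η = N ^ (-δ) * N ^ (-(5 : ℝ) / 8) * q ^ (-(1 : ℝ) / 4)) :
    0 < √κ ∧ √κ ≤ 1 ∧ 1 / (N ^ (1 + δ) * η) ≤ N ^ (-(1 / 8 - 3 * β / 4 - δ / 2)) * √κ := by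
  have hN0 : 0 < N := by linarith
  subst hq hη
  have hηN : N ^ (1 + δ) * (N ^ (-δ) * N ^ (-(5 : ℝ) / 8) * (N ^ β) ^ (-(1 : ℝ) / 4))
      = N ^ (3 / 8 - β / 4) := by
    simp only [← rpow_mul hN0.le, ← rpow_add hN0]
    ring_nf
  have hκN : N ^ (-δ) / (√N * N ^ β) = N ^ (-δ - 1 / 2 - β) := by
    rw [sqrt_eq_rpow, ← rpow_add hN0, ← rpow_sub hN0]
    ring_nf
  have hsqrt : N ^ (-(1 / 8 - 3 * β / 4 - δ / 2)) * √(N ^ (-δ - 1 / 2 - β))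
      = N ^ (-(3 / 8 - β / 4)) := by
    rw [sqrt_eq_rpow, ← rpow_mul hN0.le, ← rpow_add hN0]
    ring_nf
  rw [hκN] at hκ
  refine ⟨sqrt_pos.2 ((rpow_pos_of_pos hN0 _).trans_le hκ.1), sqrt_le_one.2 hκ.2, ?_⟩
  rw [hηN, one_div, ← rpow_neg hN0.le, ← hsqrt]
  gcongr
  exact hκ.1

theorem eventually_const_mul_natCast_rpow_le (C : ℝ) {e : ℝ} (he : e < 0) {c : ℝ} (hc : 0 < c) :
    ∀ᶠ n : ℕ in atTop, C * (n : ℝ) ^ e ≤ c := by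
  have h : Tendsto (fun n : ℕ => C * (n : ℝ) ^ e) atTop (nhds (C * 0)) := by
    refine tendsto_const_nhds.mul ?_
    simpa [Function.comp_def] using
      (tendsto_rpow_neg_atTop (neg_pos.2 he)).comp tendsto_natCast_atTop_atTop
  exact h.eventually_le_const (by simpa using hc)

theorem eventually_const_le_natCast_rpow (C : ℝ) {e : ℝ} (he : 0 < e) :
    ∀ᶠ n : ℕ in atTop, C ≤ (n : ℝ) ^ e :=
  ((tendsto_rpow_atTop he).comp tendsto_natCast_atTop_atTop).eventually_ge_atTop C

section Negligible

variable {Ω : ℕ → Type*} [∀ n, MeasurableSpace (Ω n)] {P : ∀ n, Measure (Ω n)}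

def Negligible (P : ∀ n, Measure (Ω n)) (E : ∀ n, Set (Ω n)) : Prop :=
  ∀ D : ℝ, 0 < D → ∀ᶠ n : ℕ in atTop, P n (E n) ≤ ENNReal.ofReal ((n : ℝ) ^ (-D))

theorem sDom_iff_negligible {X : ∀ n, Ω n → ℝ} {Y : ℕ → ℝ} :
    SDom P X Y ↔ ∀ ξ : ℝ, 0 < ξ → Negligible P fun n => {ω | (n : ℝ) ^ ξ * Y n < |X n ω|} := by
  simp only [SDom, Negligible, eventually_atTop]

theorem Negligible.mono {E F : ∀ n, Set (Ω n)} (hF : Negligible P F)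
    (hEF : ∀ᶠ n : ℕ in atTop, E n ⊆ F n) : Negligible P E := fun D hD => by
  filter_upwards [hF D hD, hEF] with n hn hsub using (measure_mono hsub).trans hn

theorem Negligible.union {E F : ∀ n, Set (Ω n)} (hE : Negligible P E) (hF : Negligible P F) :
    Negligible P fun n => E n ∪ F n := fun D hD => by
  filter_upwards [hE (D + 1) (by linarith), hF (D + 1) (by linarith), eventually_ge_atTop 2]
    with n hEn hFn hn
  have hn : (2 : ℝ) ≤ n := by exact_mod_cast hn
  have hsplit : (n : ℝ) ^ (-D) = n * (n : ℝ) ^ (-(D + 1)) := by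
    rw [show -D = 1 + -(D + 1) by ring, Real.rpow_add (by positivity), Real.rpow_one]
  calc P n (E n ∪ F n) ≤ P n (E n) + P n (F n) := measure_union_le _ _
    _ ≤ ENNReal.ofReal ((n : ℝ) ^ (-(D + 1)) + (n : ℝ) ^ (-(D + 1))) := by
      rw [ENNReal.ofReal_add (by positivity) (by positivity)]
      exact add_le_add hEn hFn
    _ ≤ ENNReal.ofReal ((n : ℝ) ^ (-D)) := by
      refine ENNReal.ofReal_le_ofReal ?_
      rw [hsplit]
      nlinarith [Real.rpow_nonneg (Nat.cast_nonneg n : (0 : ℝ) ≤ n) (-(D + 1))]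

theorem Negligible.biUnion {ι : Type*} (s : Finset ι) {E : ι → ∀ n, Set (Ω n)}
    (h : ∀ i ∈ s, Negligible P (E i)) : Negligible P fun n => ⋃ i ∈ s, E i n := by
  classical
  induction s using Finset.induction_on with
  | empty => simp [Negligible]
  | insert i s _ ih =>
    simp only [Finset.set_biUnion_insert]
    exact (h i (by simp)).union (ih fun j hj => h j (by simp [hj]))

end Negligible

theorem im_selfconsistent_stability_general
    {Ω : ℕ → Type*} [∀ n, MeasurableSpace (Ω n)]
    (P : ∀ n, Measure (Ω n))
    (β δ : ℝ) (hβ : 0 < β) (hβ' : β < 1 / 6) (hδ : δ = min β (1 / 6 - β) / 10)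
    (q : ℕ → ℝ) (hq : ∀ n : ℕ, q n = (n : ℝ) ^ β)
    (κ η : ℕ → ℝ)
    (hκ : ∀ n : ℕ, 1 ≤ n → (n : ℝ) ^ (-δ) / (Real.sqrt n * q n) ≤ κ n ∧ κ n ≤ 1)
    (hη : ∀ n : ℕ, η n = (n : ℝ) ^ (-δ) * (n : ℝ) ^ (-(5 : ℝ) / 8) * q n ^ (-(1 : ℝ) / 4))
    -- `Pz n ω` is the (random) self-consistent polynomial `x ↦ P(z, x)`
    (Pz : ∀ n, Ω n → ℂ → ℂ) (m G : ∀ n, Ω n → ℂ)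
    (hpoly : ∀ n ω, ∃ p : Polynomial ℂ, p.natDegree ≤ 2 * ⌈β⁻¹⌉₊ ∧ ∀ x, Pz n ω x = p.eval x)
    (hroot : ∀ n ω, Pz n ω (m n ω) = 0)
    (hGm : SDom P (fun n ω => ‖G n ω - m n ω‖) (fun n => Real.sqrt (κ n) * (n : ℝ) ^ (-δ)))
    (hP' : ∃ c C : ℝ, 0 < c ∧ 0 < C ∧ ∀ n : ℕ, 1 ≤ n → ∀ ω,
      c * Real.sqrt (κ n) ≤ ‖deriv (Pz n ω) (m n ω)‖ ∧
        ‖deriv (Pz n ω) (m n ω)‖ ≤ C * Real.sqrt (κ n))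
    (hPim : ∀ k : ℕ, 1 ≤ k →
      SDom P (fun n ω => |(iteratedDeriv k (Pz n ω) (m n ω)).im|)
        (fun n => 1 / ((n : ℝ) ^ (1 + δ) * η n)))
    (hPk : ∀ k : ℕ, SDom P (fun n ω => ‖iteratedDeriv k (Pz n ω) (m n ω)‖) (fun _ => 1))
    (ε : ℕ → ℝ)
    (hImP : SDom P (fun n ω => |(Pz n ω (G n ω)).im|) ε) :
    SDom P (fun n ω => |(G n ω).im - (m n ω).im|)
      (fun n => ε n / Real.sqrt (κ n) + 1 / ((n : ℝ) ^ (1 + δ) * η n)) := by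
  obtain ⟨c, _, hc, -, hPder⟩ := hP'
  obtain ⟨hδ0, hθ⟩ := exponents_pos hβ hβ' hδ
  set θ := 1 / 8 - 3 * β / 4 - δ / 2
  set K := 2 * ⌈β⁻¹⌉₊
  simp only [sDom_iff_negligible] at hGm hImP hPim hPk ⊢
  intro ξ hξ
  obtain ⟨ξ', hξ'0, hξ'ξ, hξ'δ, hξ'θ⟩ : ∃ ξ', 0 < ξ' ∧ ξ' < ξ ∧ ξ' < δ / 2 ∧ ξ' < θ := by
    simpa only [lt_min_iff] using exists_between (lt_min hξ (lt_min (half_pos hδ0) hθ))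
  refine Negligible.mono (((hGm ξ' hξ'0).union (hImP ξ' hξ'0)).union
    ((Negligible.biUnion (Icc 1 (K + 1)) fun k hk => hPim k (mem_Icc.1 hk).1 ξ' hξ'0).union
      (Negligible.biUnion (Icc 2 (K + 1)) fun k _ => hPk k ξ' hξ'0))) ?_
  filter_upwards [eventually_ge_atTop 1,
    eventually_const_mul_natCast_rpow_le 2 (by linarith : ξ' - θ < 0) hc,
    eventually_const_mul_natCast_rpow_le (K * (K + 1)) (by linarith : 2 * ξ' - δ < 0)
      (c := c / 4) (by positivity),
    eventually_const_le_natCast_rpow (4 * (K + 1) / c) (by linarith : 0 < ξ - ξ')]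
    with n hn hθn hδn hξn ω
  contrapose!
  simp only [Set.mem_union, Set.mem_iUnion, Set.mem_ofPred_eq, not_or, not_exists, not_lt,
    abs_abs, abs_norm, mul_one]
  rintro ⟨⟨hu, hP⟩, him, hnorm⟩
  obtain ⟨p, hdeg, hp⟩ := hpoly n ω
  obtain ⟨hs, hs1, hb⟩ := sqrt_kappa_bounds (Nat.one_le_cast.2 hn) (hq n) (hκ n hn) (hη n)
  have hd := (hPder n hn ω).1
  rw [funext hp] at hP him hnorm hd
  rw [← Complex.sub_im]
  exact p.abs_im_sub_le_of_rpow_bounds (hdeg.trans K.le_succ) (hp _ ▸ hroot n ω)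
    (Nat.one_le_cast.2 hn) (by linarith) hc hs hs1 hb hθn hδn hξn hu hP hd him hnorm

/-- **Stability of the imaginary part of the self-consistent equation** (Lemma 6.4): with
`z = L₀ + 𝒵 + κ + iη`, `w = κ + iη ∈ 𝔜_*`, assume `|Ḡ − m| ≺ √κ N^{−δ}`,
`|∂₂P(z,m)| ≍ √κ`, `|Im ∂₂^k P(z,m)| ≺ 1/(N^{1+δ}η)` for `k ≥ 1`, `|∂₂^k P(z,m)| ≺ 1`
and `P(z,m) = 0`.  If `Im P(z, Ḡ) ≺ ε` for a deterministic `ε ∈ [N^{−1}, N^{−δ}]`, then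
`|Im Ḡ − Im m| ≺ ε/√κ + 1/(N^{1+δ}η)`. -/
theorem im_selfconsistent_stability
    {Ω : ℕ → Type*} [∀ n, MeasurableSpace (Ω n)]
    (P : ∀ n, Measure (Ω n)) [∀ n, IsProbabilityMeasure (P n)]
    (β δ : ℝ) (hβ : 0 < β) (hβ' : β < 1 / 6) (hδ : δ = min β (1 / 6 - β) / 10)
    (q : ℕ → ℝ) (hq : ∀ n : ℕ, q n = (n : ℝ) ^ β)
    (κ η : ℕ → ℝ)
    (hκ : ∀ n : ℕ, 1 ≤ n → (n : ℝ) ^ (-δ) / (Real.sqrt n * q n) ≤ κ n ∧ κ n ≤ 1)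
    (hη : ∀ n : ℕ, η n = (n : ℝ) ^ (-δ) * (n : ℝ) ^ (-(5 : ℝ) / 8) * q n ^ (-(1 : ℝ) / 4))
    -- `Pz n ω` is the (random) self-consistent polynomial `x ↦ P(z, x)`
    (Pz : ∀ n, Ω n → ℂ → ℂ) (m G : ∀ n, Ω n → ℂ)
    (hpoly : ∀ n ω, ∃ p : Polynomial ℂ, p.natDegree ≤ 2 * ⌈β⁻¹⌉₊ ∧ ∀ x, Pz n ω x = p.eval x)
    (hroot : ∀ n ω, Pz n ω (m n ω) = 0)
    (hGm : SDom P (fun n ω => ‖G n ω - m n ω‖) (fun n => Real.sqrt (κ n) * (n : ℝ) ^ (-δ)))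
    (hP' : ∃ c C : ℝ, 0 < c ∧ 0 < C ∧ ∀ n : ℕ, 1 ≤ n → ∀ ω,
      c * Real.sqrt (κ n) ≤ ‖deriv (Pz n ω) (m n ω)‖ ∧
        ‖deriv (Pz n ω) (m n ω)‖ ≤ C * Real.sqrt (κ n))
    (hPim : ∀ k : ℕ, 1 ≤ k →
      SDom P (fun n ω => |(iteratedDeriv k (Pz n ω) (m n ω)).im|)
        (fun n => 1 / ((n : ℝ) ^ (1 + δ) * η n)))
    (hPk : ∀ k : ℕ, SDom P (fun n ω => ‖iteratedDeriv k (Pz n ω) (m n ω)‖) (fun _ => 1))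
    (ε : ℕ → ℝ) (hε : ∀ n : ℕ, 1 ≤ n → (n : ℝ)⁻¹ ≤ ε n ∧ ε n ≤ (n : ℝ) ^ (-δ))
    (hImP : SDom P (fun n ω => |(Pz n ω (G n ω)).im|) ε) :
    SDom P (fun n ω => |(G n ω).im - (m n ω).im|)
      (fun n => ε n / Real.sqrt (κ n) + 1 / ((n : ℝ) ^ (1 + δ) * η n)) :=
  im_selfconsistent_stability_general P β δ hβ hβ' hδ q hq κ η hκ hη Pz m G hpoly hroot hGm hP' hPim
    hPk ε hImP
end

section
/- Quantile shift under random rescaling: Let ϱ₀ be a symmetric probability measure on [−L₀, L₀] with square-root edges (density ≍ √(L₀²−E²)), and let γ_{0,i} denote its i-th N-quantile. Let ϱ be the push-forward of ϱ₀ under multiplication by (1 + 𝒵/2)(1 + O_≺(ε)) with random 𝒵 ≺ N^{-1/2}q^{-1} and ε = 1/(√N q³). Then the i-th N-quantile γ_i of ϱ satisfies γ_i = γ_{0,i} + (γ_{0,i}/2)𝒵 + O_≺(1/(√N q³)) uniformly in i ∈ {1,…,N}. -/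
/-!
On the event where `𝒵` and the error are both small, the scaling factor `T = (1 + 𝒵/2)(1 + err)`
is positive, and since the square-root lower bound makes the distribution function of `ϱ₀`
strictly increasing on `[−L₀, L₀]`, quantiles are transported exactly: `γᵢ = T γ₀ᵢ`. Hence
`γᵢ − γ₀ᵢ − γ₀ᵢ𝒵/2 = γ₀ᵢ (1 + 𝒵/2) err`, which is `O(|err|)` because `|γ₀ᵢ| ≤ L₀ ≤ 3`; the
complementary event has probability `O(N^{−D})` by the two stochastic dominations.
-/

open MeasureTheory

open Set Filter

lemma withDensity_Ioc_pos_of_le {ρ : ℝ → ℝ} {a b c : ℝ} (hc : 0 < c) (hab : a < b)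
    (hρ : ∀ x ∈ Ioc a b, c ≤ ρ x) :
    0 < volume.withDensity (fun x => ENNReal.ofReal (ρ x)) (Ioc a b) := by
  rw [withDensity_apply _ measurableSet_Ioc]
  calc (0 : ENNReal) < ENNReal.ofReal c * volume (Ioc a b) := by
        rw [Real.volume_Ioc]
        exact ENNReal.mul_pos (ENNReal.ofReal_pos.2 hc).ne' (ENNReal.ofReal_pos.2 (by linarith)).ne'
    _ = ∫⁻ _ in Ioc a b, ENNReal.ofReal c := (setLIntegral_const _ _).symm
    _ ≤ ∫⁻ x in Ioc a b, ENNReal.ofReal (ρ x) :=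
        setLIntegral_mono' measurableSet_Ioc fun x hx => ENNReal.ofReal_le_ofReal (hρ x hx)

lemma withDensity_Ioc_pos_of_sqrt_le {ρ : ℝ → ℝ} {L c a b : ℝ} (hc : 0 < c)
    (hρ : ∀ x ∈ Icc (-L) L, c * √(L ^ 2 - x ^ 2) ≤ ρ x) (ha : -L ≤ a) (hab : a < b)
    (hb : b ≤ L) :
    0 < volume.withDensity (fun x => ENNReal.ofReal (ρ x)) (Ioc a b) := by
  have hthird : 0 < c * ((b - a) / 3) := mul_pos hc (by linarith)
  -- on the middle third of `(a, b]` both `L - x` and `L + x` exceed `(b - a) / 3`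
  have hmid : 0 < volume.withDensity (fun x => ENNReal.ofReal (ρ x))
      (Ioc ((2 * a + b) / 3) ((a + 2 * b) / 3)) := by
    refine withDensity_Ioc_pos_of_le hthird (by linarith) fun x ⟨hx₁, hx₂⟩ => ?_
    have hsqrt : (b - a) / 3 ≤ √(L ^ 2 - x ^ 2) :=
      (Real.le_sqrt (by linarith) (by nlinarith)).2 (by nlinarith)
    exact (mul_le_mul_of_nonneg_left hsqrt hc.le).trans (hρ x ⟨by linarith, by linarith⟩)
  exact hmid.trans_le (measure_mono (Ioc_subset_Ioc (by linarith) (by linarith)))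

lemma strictMonoOn_measure_Iic {μ : Measure ℝ} [IsFiniteMeasure μ] {s : Set ℝ}
    (hμ : ∀ a ∈ s, ∀ b ∈ s, a < b → 0 < μ (Ioc a b)) :
    StrictMonoOn (fun x => μ (Iic x)) s := by
  intro a ha b hb hab
  show μ (Iic a) < μ (Iic b)
  rw [← Iic_union_Ioc_eq_Iic hab.le, measure_union (Iic_disjoint_Ioc le_rfl) measurableSet_Ioc]
  exact ENNReal.lt_add_right (measure_ne_top _ _) (hμ a ha b hb hab).ne'

lemma map_const_mul_apply_Iic (μ : Measure ℝ) {T : ℝ} (hT : 0 < T) (y : ℝ) :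
    μ.map (fun x => T * x) (Iic y) = μ (Iic (y / T)) := by
  rw [Measure.map_apply (measurable_const_mul T) measurableSet_Iic]
  congr 1
  ext x
  simp only [mem_preimage, mem_Iic, le_div_iff₀ hT, mul_comm]

lemma eq_mul_of_map_const_mul_Iic_eq {μ : Measure ℝ} {s : Set ℝ}
    (hμ : StrictMonoOn (fun x => μ (Iic x)) s) {T γ γ₀ : ℝ} (hT : 0 < T) (hγ : γ / T ∈ s)
    (hγ₀ : γ₀ ∈ s) (h : μ.map (fun x => T * x) (Iic γ) = μ (Iic γ₀)) :
    γ = T * γ₀ := by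
  rw [map_const_mul_apply_Iic μ hT] at h
  rw [← hμ.injOn hγ hγ₀ h]
  field_simp

lemma abs_sub_sub_le_of_map_rescale_Iic_eq {μ : Measure ℝ} {L z e γ γ₀ : ℝ}
    (hμ : StrictMonoOn (fun x => μ (Iic x)) (Icc (-L) L)) (hz : |z| ≤ 1 / 2) (he : |e| ≤ 1 / 2)
    (hγ : |γ| ≤ (1 + z / 2) * (1 + e) * L) (hγ₀ : |γ₀| ≤ L)
    (h : μ.map (fun x => (1 + z / 2) * (1 + e) * x) (Iic γ) = μ (Iic γ₀)) :
    |γ - γ₀ - γ₀ / 2 * z| ≤ 4 / 3 * L * |e| := by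
  obtain ⟨hz₁, hz₂⟩ := abs_le.1 hz
  have hT : 0 < (1 + z / 2) * (1 + e) := mul_pos (by linarith) (by linarith [(abs_le.1 he).1])
  have hγT : |γ / ((1 + z / 2) * (1 + e))| ≤ L := by
    rw [abs_div, abs_of_pos hT, div_le_iff₀ hT, mul_comm]
    exact hγ
  have hγ_eq := eq_mul_of_map_const_mul_Iic_eq hμ hT (abs_le.1 hγT) (abs_le.1 hγ₀) h
  calc |γ - γ₀ - γ₀ / 2 * z| = |γ₀| * |1 + z / 2| * |e| := by
        rw [hγ_eq, ← abs_mul, ← abs_mul]; ring_nf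
    _ ≤ L * (4 / 3) * |e| := by
        gcongr
        · exact (abs_nonneg γ₀).trans hγ₀
        · exact abs_le.2 ⟨by linarith, by linarith⟩
    _ = 4 / 3 * L * |e| := by ring

lemma measure_setOf_lt_abs_le_add {α : Type*} [MeasurableSpace α] (μ : Measure α)
    {W Z E : α → ℝ} {a b c : ℝ} (h : ∀ x, |Z x| ≤ a → |E x| ≤ b → |W x| ≤ c) :
    μ {x | c < |W x|} ≤ μ {x | a < |Z x|} + μ {x | b < |E x|} := by
  refine (measure_mono fun x hx => ?_).trans (measure_union_le _ _)
  by_contra hx'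
  simp only [mem_union, mem_ofPred_eq, not_or, not_lt] at hx'
  exact (h x hx'.1 hx'.2).not_gt hx

lemma rpow_neg_add_one_add_self_le {x : ℝ} (hx : 2 ≤ x) (D : ℝ) :
    x ^ (-(D + 1)) + x ^ (-(D + 1)) ≤ x ^ (-D) := by
  have hx₀ : 0 < x := by linarith
  have hsplit : x ^ (-(D + 1)) = x ^ (-D) * x⁻¹ := by
    rw [neg_add, Real.rpow_add hx₀, Real.rpow_neg_one]
  have hinv : x⁻¹ ≤ 1 / 2 := by rw [inv_le_comm₀ hx₀ (by norm_num)]; linarith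
  rw [hsplit]
  nlinarith [Real.rpow_nonneg hx₀.le (-D)]

lemma one_div_sqrt_mul_le_rpow {x y : ℝ} (hx : 0 < x) (hy : 1 ≤ y) :
    1 / (√x * y) ≤ x ^ (-(1 / 2) : ℝ) := by
  rw [Real.rpow_neg hx.le, ← Real.sqrt_eq_rpow, one_div]
  gcongr
  exact le_mul_of_one_le_right (Real.sqrt_nonneg x) hy

theorem SDom.uniform_of_abs_le_mul {Ω : ℕ → Type*} [∀ n, MeasurableSpace (Ω n)]
    {P : ∀ n, Measure (Ω n)} {Z E : ∀ n, Ω n → ℝ} {Y₁ Y₂ : ℕ → ℝ} {W : ∀ n, ℕ → Ω n → ℝ}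
    {κ δ K : ℝ} (hZ : SDom P Z Y₁) (hE : SDom P E Y₂) (hκ : 0 < κ) (hδ : 0 < δ)
    (hY₁ : ∀ᶠ n : ℕ in atTop, Y₁ n ≤ (n : ℝ) ^ (-κ))
    (hY₂ : ∀ᶠ n : ℕ in atTop, Y₂ n ≤ (n : ℝ) ^ (-κ))
    (hW : ∀ n i, 1 ≤ i → i ≤ n → ∀ ω, |Z n ω| ≤ δ → |E n ω| ≤ δ → |W n i ω| ≤ K * |E n ω|) :
    ∀ ε : ℝ, 0 < ε → ∀ D : ℝ, 0 < D → ∃ N₀ : ℕ, ∀ n, N₀ ≤ n → ∀ i : ℕ, 1 ≤ i → i ≤ n →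
      P n {ω | (n : ℝ) ^ ε * Y₂ n < |W n i ω|} ≤ ENNReal.ofReal ((n : ℝ) ^ (-D)) := by
  intro ε hε D hD
  set ε₁ := min ε κ / 2 with hε₁_def
  have hε₁ : 0 < ε₁ := by positivity
  have hε₁ε : ε₁ < ε := by have := min_le_left ε κ; linarith
  have hε₁κ : ε₁ < κ := by have := min_le_right ε κ; linarith
  have hsmall : ∀ᶠ n : ℕ in atTop, (n : ℝ) ^ (-(κ - ε₁)) ≤ δ :=
    ((tendsto_rpow_neg_atTop (by linarith)).comp tendsto_natCast_atTop_atTop).eventually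
      (ge_mem_nhds hδ)
  have hlarge : ∀ᶠ n : ℕ in atTop, K ≤ (n : ℝ) ^ (ε - ε₁) :=
    ((tendsto_rpow_atTop (by linarith)).comp tendsto_natCast_atTop_atTop).eventually_ge_atTop K
  obtain ⟨N₁, hN₁⟩ := hZ ε₁ hε₁ (D + 1) (by linarith)
  obtain ⟨N₂, hN₂⟩ := hE ε₁ hε₁ (D + 1) (by linarith)
  obtain ⟨N₀, hN₀⟩ := eventually_atTop.1 ((eventually_ge_atTop (max 2 (max N₁ N₂))).and
    (hY₁.and (hY₂.and (hsmall.and hlarge))))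
  refine ⟨N₀, fun n hn i hi hin => ?_⟩
  obtain ⟨hnN, hY₁n, hY₂n, hsmalln, hlargen⟩ := hN₀ n hn
  simp only [max_le_iff] at hnN
  have hn₂ : (2 : ℝ) ≤ n := by exact_mod_cast hnN.1
  have hn₀ : (0 : ℝ) < n := by linarith
  have hbelow : ∀ {Y : ℝ}, Y ≤ (n : ℝ) ^ (-κ) → (n : ℝ) ^ ε₁ * Y ≤ δ := fun hY =>
    calc (n : ℝ) ^ ε₁ * _ ≤ (n : ℝ) ^ ε₁ * (n : ℝ) ^ (-κ) := by gcongr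
      _ = (n : ℝ) ^ (-(κ - ε₁)) := by rw [← Real.rpow_add hn₀]; ring_nf
      _ ≤ δ := hsmalln
  have hgood : ∀ ω, |Z n ω| ≤ (n : ℝ) ^ ε₁ * Y₁ n → |E n ω| ≤ (n : ℝ) ^ ε₁ * Y₂ n →
      |W n i ω| ≤ (n : ℝ) ^ ε * Y₂ n := fun ω hZω hEω =>
    calc |W n i ω| ≤ K * |E n ω| :=
          hW n i hi hin ω (hZω.trans (hbelow hY₁n)) (hEω.trans (hbelow hY₂n))
      _ ≤ (n : ℝ) ^ (ε - ε₁) * ((n : ℝ) ^ ε₁ * Y₂ n) :=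
          mul_le_mul hlargen hEω (abs_nonneg _) (by positivity)
      _ = (n : ℝ) ^ ε * Y₂ n := by rw [← mul_assoc, ← Real.rpow_add hn₀, sub_add_cancel]
  calc P n {ω | (n : ℝ) ^ ε * Y₂ n < |W n i ω|}
      ≤ P n {ω | (n : ℝ) ^ ε₁ * Y₁ n < |Z n ω|} + P n {ω | (n : ℝ) ^ ε₁ * Y₂ n < |E n ω|} :=
        measure_setOf_lt_abs_le_add (P n) hgood
    _ ≤ ENNReal.ofReal ((n : ℝ) ^ (-(D + 1))) + ENNReal.ofReal ((n : ℝ) ^ (-(D + 1))) :=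
        add_le_add (hN₁ n hnN.2.1) (hN₂ n hnN.2.2)
    _ ≤ ENNReal.ofReal ((n : ℝ) ^ (-D)) := by
        rw [← ENNReal.ofReal_add (by positivity) (by positivity)]
        exact ENNReal.ofReal_le_ofReal (rpow_neg_add_one_add_self_le hn₂ D)
theorem quantile_shift_random_rescaling_general
    {Ω : ℕ → Type*} [∀ n, MeasurableSpace (Ω n)]
    (P : ∀ n, Measure (Ω n))
    (β : ℝ) (hβ : 0 < β)
    (q : ℕ → ℝ) (hq : ∀ n : ℕ, q n = (n : ℝ) ^ β)
    (ϱ₀ : ℕ → Measure ℝ) (hprob : ∀ n, IsProbabilityMeasure (ϱ₀ n))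
    (ρ : ℕ → ℝ → ℝ) (L₀ : ℕ → ℝ)
    (hL₀ : ∀ n, 1 ≤ L₀ n ∧ L₀ n ≤ 3)
    (hdens : ∀ n, ϱ₀ n = volume.withDensity (fun x => ENNReal.ofReal (ρ n x)))
    (hedge : ∃ c C : ℝ, 0 < c ∧ 0 < C ∧ ∀ n, ∀ x ∈ Set.Icc (-(L₀ n)) (L₀ n),
      c * Real.sqrt ((L₀ n) ^ 2 - x ^ 2) ≤ ρ n x ∧ ρ n x ≤ C * Real.sqrt ((L₀ n) ^ 2 - x ^ 2))
    (Z err : ∀ n, Ω n → ℝ)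
    (hZ : SDom P Z (fun n => 1 / (Real.sqrt n * q n)))
    (herr : SDom P err (fun n => 1 / (Real.sqrt n * q n ^ 3)))
    (γ₀ : ℕ → ℕ → ℝ) (γ : ∀ n : ℕ, ℕ → Ω n → ℝ)
    (hγ₀ : ∀ n : ℕ, ∀ i : ℕ, 1 ≤ i → i ≤ n →
      ϱ₀ n (Set.Iic (γ₀ n i)) = ENNReal.ofReal ((i : ℝ) / n) ∧ |γ₀ n i| ≤ L₀ n)
    (hγ : ∀ n : ℕ, ∀ i : ℕ, 1 ≤ i → i ≤ n → ∀ ω,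
      ((ϱ₀ n).map (fun x => (1 + Z n ω / 2) * (1 + err n ω) * x)) (Set.Iic (γ n i ω))
          = ENNReal.ofReal ((i : ℝ) / n) ∧
        |γ n i ω| ≤ (1 + Z n ω / 2) * (1 + err n ω) * L₀ n) :
    ∀ ε : ℝ, 0 < ε → ∀ D : ℝ, 0 < D → ∃ N₀ : ℕ, ∀ n, N₀ ≤ n → ∀ i : ℕ, 1 ≤ i → i ≤ n →
      P n {ω | (n : ℝ) ^ ε * (1 / (Real.sqrt n * q n ^ 3))
            < |γ n i ω - γ₀ n i - γ₀ n i / 2 * Z n ω|}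
        ≤ ENNReal.ofReal ((n : ℝ) ^ (-D)) := by
  obtain ⟨c, _, hc, _, hedge⟩ := hedge
  have hcdf : ∀ n, StrictMonoOn (fun x => ϱ₀ n (Iic x)) (Icc (-L₀ n) (L₀ n)) := fun n =>
    haveI := hprob n
    strictMonoOn_measure_Iic fun a ha b hb hab => hdens n ▸
      withDensity_Ioc_pos_of_sqrt_le hc (fun x hx => (hedge n x hx).1) ha.1 hab hb.2
  have hshift : ∀ n i, 1 ≤ i → i ≤ n → ∀ ω, |Z n ω| ≤ 1 / 2 → |err n ω| ≤ 1 / 2 →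
      |γ n i ω - γ₀ n i - γ₀ n i / 2 * Z n ω| ≤ 4 * |err n ω| := fun n i hi hin ω hZω herrω =>
    (abs_sub_sub_le_of_map_rescale_Iic_eq (hcdf n) hZω herrω (hγ n i hi hin ω).2
      (hγ₀ n i hi hin).2 ((hγ n i hi hin ω).1.trans (hγ₀ n i hi hin).1.symm)).trans
      (by nlinarith [(hL₀ n).2, abs_nonneg (err n ω)])
  have hdecay : ∀ k : ℕ, ∀ᶠ n : ℕ in atTop,
      1 / (Real.sqrt n * q n ^ k) ≤ (n : ℝ) ^ (-(1 / 2) : ℝ) := fun k =>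
    eventually_atTop.2 ⟨1, fun n hn => one_div_sqrt_mul_le_rpow (by exact_mod_cast hn)
      (one_le_pow₀ (hq n ▸ Real.one_le_rpow (by exact_mod_cast hn) hβ.le))⟩
  exact SDom.uniform_of_abs_le_mul (κ := 1 / 2) hZ herr (by norm_num) (by norm_num)
    (by simpa using hdecay 1) (hdecay 3) hshift

/-- **Quantile shift under random rescaling**: let `ϱ₀` be a symmetric probability measure on
`[−L₀, L₀]` with square-root edges, `γ₀ᵢ` its `i`-th `N`-quantile, and let `ϱ` be the push-forward
of `ϱ₀` under multiplication by `T = (1 + 𝒵/2)(1 + O_≺(ε))` with `𝒵 ≺ N^{-1/2}q^{-1}` and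
`ε = 1/(√N q³)`.  Then the `i`-th `N`-quantile `γᵢ` of `ϱ` satisfies
`γᵢ = γ₀ᵢ + (γ₀ᵢ/2)𝒵 + O_≺(1/(√N q³))` uniformly in `i ∈ {1,…,N}`. -/
theorem quantile_shift_random_rescaling
    {Ω : ℕ → Type*} [∀ n, MeasurableSpace (Ω n)]
    (P : ∀ n, Measure (Ω n)) [∀ n, IsProbabilityMeasure (P n)]
    (β : ℝ) (hβ : 0 < β) (hβ' : β < 1 / 6)
    (q : ℕ → ℝ) (hq : ∀ n : ℕ, q n = (n : ℝ) ^ β)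
    (ϱ₀ : ℕ → Measure ℝ) (hprob : ∀ n, IsProbabilityMeasure (ϱ₀ n))
    (ρ : ℕ → ℝ → ℝ) (L₀ : ℕ → ℝ)
    (hL₀ : ∀ n, 1 ≤ L₀ n ∧ L₀ n ≤ 3)
    (hdens : ∀ n, ϱ₀ n = volume.withDensity (fun x => ENNReal.ofReal (ρ n x)))
    (hsupp : ∀ n, ∀ x ∉ Set.Icc (-(L₀ n)) (L₀ n), ρ n x = 0)
    (hsym : ∀ n x, ρ n (-x) = ρ n x)
    (hedge : ∃ c C : ℝ, 0 < c ∧ 0 < C ∧ ∀ n, ∀ x ∈ Set.Icc (-(L₀ n)) (L₀ n),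
      c * Real.sqrt ((L₀ n) ^ 2 - x ^ 2) ≤ ρ n x ∧ ρ n x ≤ C * Real.sqrt ((L₀ n) ^ 2 - x ^ 2))
    (Z err : ∀ n, Ω n → ℝ)
    (hZ : SDom P Z (fun n => 1 / (Real.sqrt n * q n)))
    (herr : SDom P err (fun n => 1 / (Real.sqrt n * q n ^ 3)))
    (γ₀ : ℕ → ℕ → ℝ) (γ : ∀ n : ℕ, ℕ → Ω n → ℝ)
    (hγ₀ : ∀ n : ℕ, ∀ i : ℕ, 1 ≤ i → i ≤ n →
      ϱ₀ n (Set.Iic (γ₀ n i)) = ENNReal.ofReal ((i : ℝ) / n) ∧ |γ₀ n i| ≤ L₀ n)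
    (hγ : ∀ n : ℕ, ∀ i : ℕ, 1 ≤ i → i ≤ n → ∀ ω,
      ((ϱ₀ n).map (fun x => (1 + Z n ω / 2) * (1 + err n ω) * x)) (Set.Iic (γ n i ω))
          = ENNReal.ofReal ((i : ℝ) / n) ∧
        |γ n i ω| ≤ (1 + Z n ω / 2) * (1 + err n ω) * L₀ n) :
    ∀ ε : ℝ, 0 < ε → ∀ D : ℝ, 0 < D → ∃ N₀ : ℕ, ∀ n, N₀ ≤ n → ∀ i : ℕ, 1 ≤ i → i ≤ n →
      P n {ω | (n : ℝ) ^ ε * (1 / (Real.sqrt n * q n ^ 3))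
            < |γ n i ω - γ₀ n i - γ₀ n i / 2 * Z n ω|}
        ≤ ENNReal.ofReal ((n : ℝ) ^ (-D)) :=
  quantile_shift_random_rescaling_general P β hβ q hq ϱ₀ hprob ρ L₀ hL₀ hdens hedge Z err hZ herr γ₀
    γ hγ₀ hγ
end
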